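/- Define the swapping fidelity F_s(F₁, F₂) = F₁·F₂ + (1/3)(1−F₁)(1−F₂). If 1/4 ≤ F₁ ≤ 1 and 1/4 ≤ F₂ ≤ 1, then F_s(F₁, F₂) ≤ min(F₁, F₂); i.e., swapping never increases fidelity beyond either input. Moreover, if in addition F₁ < 1 and F₂ > 1/4, then F_s(F₁, F₂) < F₂, so the swapping process causes strict fidelity loss. -/

import Mathlib

/-!
Both losses factor: `F₂ - F_s(F₁, F₂) = (1 - F₁)(4F₂ - 1)/3`, a product of two factors that are
nonnegative on `[1/4, 1]` and positive once `F₁ < 1` and `F₂ > 1/4`; the bound by `F₁` follows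
by the symmetry of `F_s`.
-/

noncomputable def swapFidelity (F₁ F₂ : ℝ) : ℝ := F₁ * F₂ + (1 / 3) * (1 - F₁) * (1 - F₂)

namespace swapFidelity

variable {F₁ F₂ : ℝ}

theorem comm (F₁ F₂ : ℝ) : swapFidelity F₁ F₂ = swapFidelity F₂ F₁ := by
  unfold swapFidelity; ring

theorem sub_eq_mul (F₁ F₂ : ℝ) : F₂ - swapFidelity F₁ F₂ = (1 - F₁) * (4 * F₂ - 1) / 3 := by
  unfold swapFidelity; ring

theorem le_right (h₁ : F₁ ≤ 1) (h₂ : 1 / 4 ≤ F₂) : swapFidelity F₁ F₂ ≤ F₂ := by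
  have h : 0 ≤ (1 - F₁) * (4 * F₂ - 1) / 3 := by
    apply div_nonneg (mul_nonneg _ _) zero_le_three <;> linarith
  linarith [sub_eq_mul F₁ F₂]

theorem lt_right (h₁ : F₁ < 1) (h₂ : 1 / 4 < F₂) : swapFidelity F₁ F₂ < F₂ := by
  have h : 0 < (1 - F₁) * (4 * F₂ - 1) / 3 := by
    apply div_pos (mul_pos _ _) zero_lt_three <;> linarith
  linarith [sub_eq_mul F₁ F₂]

theorem le_left (h₁ : 1 / 4 ≤ F₁) (h₂ : F₂ ≤ 1) : swapFidelity F₁ F₂ ≤ F₁ :=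
  comm F₁ F₂ ▸ le_right h₂ h₁

end swapFidelity

/-- Swapping never increases fidelity beyond either input: if `1/4 ≤ F₁ ≤ 1` and
`1/4 ≤ F₂ ≤ 1`, then `F_s(F₁, F₂) ≤ min F₁ F₂`; moreover if in addition `F₁ < 1` and
`F₂ > 1/4`, then `F_s(F₁, F₂) < F₂` strictly. -/
theorem swapping_fidelity_loss
    (Fs : ℝ → ℝ → ℝ)
    (hFs : ∀ F₁ F₂ : ℝ, Fs F₁ F₂ = F₁ * F₂ + (1 / 3) * (1 - F₁) * (1 - F₂)) :
    ∀ F₁ F₂ : ℝ, 1 / 4 ≤ F₁ → F₁ ≤ 1 → 1 / 4 ≤ F₂ → F₂ ≤ 1 →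
      Fs F₁ F₂ ≤ min F₁ F₂ ∧ (F₁ < 1 → 1 / 4 < F₂ → Fs F₁ F₂ < F₂) := by
  obtain rfl : Fs = swapFidelity := funext fun F₁ => funext (hFs F₁)
  intro F₁ F₂ h₁ h₁' h₂ h₂'
  exact ⟨le_min (swapFidelity.le_left h₁ h₂') (swapFidelity.le_right h₁' h₂),
    swapFidelity.lt_right⟩
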